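/- For every a with 1 ≤ a ≤ 2^n − 1, the pairs (a, a), (a, a+1) (when a+1 ≤ 2^n) and (a, a−1) are fit: there exist g_1, g_2 ∈ Aut(Q_n) such that g_1(I_a) ∪ g_2(I_b) = I_{a+b}, for b ∈ {a−1, a, a+1} with a + b ≤ 2^n. -/

import Mathlib

/-- The hypercube graph on `{0,1}^n`: two strings adjacent iff they differ in one coordinate. -/
def hypercube (n : ℕ) : SimpleGraph (Fin n → Bool) where
  Adj x y := (Finset.univ.filter (fun i => x i ≠ y i)).card = 1
  symm := by constructor; intro x y h; simpa [ne_comm] using h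
  loopless := by constructor; intro x h; simp at h

/-- The integer represented by a string, position 0 most significant. -/
def bval {n : ℕ} (x : Fin n → Bool) : ℕ :=
  ∑ i : Fin n, if x i then 2 ^ (n - 1 - i.val) else 0

/-- The initial segment of length `a` in the binary order on `{0,1}^n`. -/
def initSeg (n a : ℕ) : Finset (Fin n → Bool) :=
  Finset.univ.filter (fun x => bval x < a)

/-- `m_j(S)`: number of elements of `S` with a `1` in coordinate `j`. -/
def mCount {n : ℕ} (S : Finset (Fin n → Bool)) (j : Fin n) : ℕ :=
  (S.filter (fun x => x j = true)).card

/-- The hyperface `F_{j,k}` of strings whose `j`-th coordinate equals `k`. -/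
def face (n : ℕ) (j : Fin n) (k : Bool) : Finset (Fin n → Bool) :=
  Finset.univ.filter (fun x => x j = k)

/-! Rotating the coordinates of `{0,1}^(n+1)` one step towards the most significant end and
then flipping the last coordinate by `e` is a cube automorphism which, on strings of value
`v < 2^n`, acts as `v ↦ 2v + e`. So the `e = 0` map sends `I_M` onto the even numbers below `2M`
and the `e = 1` map sends `I_m` onto the odd numbers below `2m`; their union is `I_{M+m}` exactly
when `m ≤ M ≤ m + 1`. -/

def permXorAut {n : ℕ} (π : Equiv.Perm (Fin n)) (f : Fin n → Bool) :
    hypercube n ≃g hypercube n where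
  toFun x i := xor (f i) (x (π i))
  invFun y j := xor (f (π.symm j)) (y (π.symm j))
  left_inv x := by funext j; simp
  right_inv y := by funext i; simp
  map_rel_iff' {x y} := by
    show (Finset.univ.filter fun i => xor (f i) (x (π i)) ≠ xor (f i) (y (π i))).card = 1 ↔ _
    simp only [ne_eq]
    rw [Finset.card_equiv π (t := Finset.univ.filter fun j => x j ≠ y j) (by simp)]
    rfl

lemma permXorAut_apply {n : ℕ} (π : Equiv.Perm (Fin n)) (f : Fin n → Bool)
    (x : Fin n → Bool) (i : Fin n) : permXorAut π f x i = xor (f i) (x (π i)) :=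
  rfl

lemma bval_eq_finFunctionFinEquiv {n : ℕ} (x : Fin n → Bool) :
    bval x = (finFunctionFinEquiv (fun i => if x i.rev then (1 : Fin 2) else 0) : ℕ) := by
  rw [finFunctionFinEquiv_apply, bval]
  refine Fintype.sum_equiv Fin.revPerm _ _ fun i => ?_
  simp only [Fin.revPerm_apply, Fin.rev_rev, Fin.val_rev]
  cases x i <;> simp [Nat.sub_sub, Nat.add_comm]

lemma bval_lt {n : ℕ} (x : Fin n → Bool) : bval x < 2 ^ n := by
  rw [bval_eq_finFunctionFinEquiv]
  exact (finFunctionFinEquiv _).isLt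

lemma bval_injective {n : ℕ} : Function.Injective (bval (n := n)) := by
  intro x y h
  rw [bval_eq_finFunctionFinEquiv, bval_eq_finFunctionFinEquiv] at h
  funext j
  have := congrFun (finFunctionFinEquiv.injective (Fin.val_injective h)) j.rev
  simp only [Fin.rev_rev] at this
  cases hx : x j <;> cases hy : y j <;> simp_all

lemma exists_bval_eq {n v : ℕ} (hv : v < 2 ^ n) : ∃ x : Fin n → Bool, bval x = v := by
  have hinj : Function.Injective fun x : Fin n → Bool => (⟨bval x, bval_lt x⟩ : Fin (2 ^ n)) :=
    fun x y h => bval_injective (congrArg Fin.val h)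
  obtain ⟨x, hx⟩ := ((Fintype.bijective_iff_injective_and_card _).2 ⟨hinj, by simp⟩).2 ⟨v, hv⟩
  exact ⟨x, congrArg Fin.val hx⟩

lemma bval_eq_head_add_tail {n : ℕ} (x : Fin (n + 1) → Bool) :
    bval x = (if x 0 then 2 ^ n else 0) + bval (Fin.tail x) := by
  rw [bval, Fin.sum_univ_succ, bval]
  congr 1
  refine Finset.sum_congr rfl fun i _ => ?_
  simp [Fin.tail, Nat.sub_sub, Nat.add_comm]

lemma bval_eq_two_mul_init_add_last {n : ℕ} (x : Fin (n + 1) → Bool) :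
    bval x = 2 * bval (Fin.init x) + (x (Fin.last n)).toNat := by
  rw [bval, Fin.sum_univ_castSucc, bval, Finset.mul_sum]
  congr 1
  · refine Finset.sum_congr rfl fun i _ => ?_
    have : n + 1 - 1 - i.val = n - 1 - i.val + 1 := by omega
    rw [Fin.val_castSucc, this, pow_succ]
    cases h : x i.castSucc <;> simp [Fin.init, h, mul_comm]
  · cases x (Fin.last n) <;> simp

lemma head_eq_false_of_bval_lt {n : ℕ} {x : Fin (n + 1) → Bool} (hx : bval x < 2 ^ n) :
    x 0 = false := by
  rw [bval_eq_head_add_tail] at hx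
  cases h : x 0 <;> simp_all

def doublingAut (n : ℕ) (e : Bool) : hypercube (n + 1) ≃g hypercube (n + 1) :=
  permXorAut (finRotate (n + 1)) fun i => e && decide (i = Fin.last n)

lemma bval_doublingAut {n : ℕ} (e : Bool) {x : Fin (n + 1) → Bool} (hx : bval x < 2 ^ n) :
    bval (doublingAut n e x) = 2 * bval x + e.toNat := by
  have h0 := head_eq_false_of_bval_lt hx
  have hinit : Fin.init (doublingAut n e x) = Fin.tail x := funext fun i => by
    simp [Fin.init, Fin.tail, doublingAut, permXorAut_apply, finRotate_apply, Fin.coeSucc_eq_succ,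
      Fin.castSucc_ne_last]
  have hlast : doublingAut n e x (Fin.last n) = e := by
    simp [doublingAut, permXorAut_apply, finRotate_apply, h0]
  rw [bval_eq_two_mul_init_add_last, hinit, hlast, bval_eq_head_add_tail x, h0]
  simp

lemma mem_image_doublingAut_initSeg {n k : ℕ} (e : Bool) (hk : k ≤ 2 ^ n)
    (z : Fin (n + 1) → Bool) :
    z ∈ (initSeg (n + 1) k).image (doublingAut n e) ↔ bval z % 2 = e.toNat ∧ bval z / 2 < k := by
  have he := Bool.toNat_le e
  simp only [Finset.mem_image, initSeg, Finset.mem_filter, Finset.mem_univ, true_and]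
  constructor
  · rintro ⟨x, hx, rfl⟩
    rw [bval_doublingAut e (hx.trans_le hk)]
    omega
  · rintro ⟨hmod, hdiv⟩
    obtain ⟨x, hx⟩ := exists_bval_eq (n := n + 1) (v := bval z / 2) (by rw [pow_succ]; omega)
    refine ⟨x, hx ▸ hdiv, bval_injective ?_⟩
    rw [bval_doublingAut e (by omega), hx]
    omega

theorem image_doublingAut_union_eq_initSeg {n M m : ℕ} (hmM : m ≤ M) (hMm : M ≤ m + 1)
    (hsum : M + m ≤ 2 ^ (n + 1)) :
    (initSeg (n + 1) M).image (doublingAut n false) ∪ (initSeg (n + 1) m).image (doublingAut n true)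
      = initSeg (n + 1) (M + m) := by
  rw [pow_succ] at hsum
  ext z
  rw [Finset.mem_union, mem_image_doublingAut_initSeg false (by omega),
    mem_image_doublingAut_initSeg true (by omega)]
  simp only [initSeg, Finset.mem_filter, Finset.mem_univ, true_and, Bool.toNat_false,
    Bool.toNat_true]
  omega

theorem stmt_17 (n a b : ℕ) (ha : 1 ≤ a) (hb : 1 ≤ b)
    (hab : b = a - 1 ∨ b = a ∨ b = a + 1) (hsum : a + b ≤ 2 ^ n) :
    ∃ g₁ g₂ : hypercube n ≃g hypercube n,
      (initSeg n a).image g₁ ∪ (initSeg n b).image g₂ = initSeg n (a + b) := by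
  obtain ⟨n, rfl⟩ : ∃ k, n = k + 1 :=
    Nat.exists_eq_succ_of_ne_zero (by rintro rfl; simp only [pow_zero] at hsum; omega)
  rcases le_or_gt b a with hba | hlt
  · exact ⟨_, _, image_doublingAut_union_eq_initSeg hba (by omega) hsum⟩
  · refine ⟨doublingAut n true, doublingAut n false, ?_⟩
    rw [Finset.union_comm, Nat.add_comm a b]
    exact image_doublingAut_union_eq_initSeg hlt.le (by omega) (by omega)
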